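/- arXiv:1603.03862 — 3 statements merged into one kernel-verified Lean document; each statement's English description precedes it below -/
import Mathlib

section
/- Let R > 0 and let v be a continuous function on the punctured disk {z ∈ ℝ² : 0 < |z| < R} such that v(z)/log(1/|z|) → m₁ as |z| → 0⁺ for some real number m₁, and suppose the conformal metric e^{2v}(dx²+dy²) is complete at the puncture, in the sense that for every C¹ curve γ : [0,1) → {0 < |z| < R} with γ(t) → 0 as t → 1⁻ one has ∫₀¹ e^{v(γ(t))}‖γ′(t)‖ dt = ∞. Then m₁ ≥ 1. (Equivalently: if m₁ < 1, then for sufficiently small r_s > 0 the radial segment t ↦ (t,0), 0 < t ≤ r_s, has finite length ∫₀^{r_s} e^{v(t,0)} dt < ∞.) -/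
/-!
If `m₁ < 1`, pick `m₁ < m < 1`. Near the puncture the asymptotics give `e^{v(z)} ≤ |z|^{-m}`,
so along a radial segment into the puncture the length integrand is dominated by
`(1 - t)^{-m}`, which is integrable since `-m > -1`. The segment is then a curve of finite
length tending to the puncture, contradicting completeness.
-/

open MeasureTheory Filter Topology
open scoped ENNReal

section GrowthBound

variable {E : Type*} [NormedAddCommGroup E]

theorem exists_pos_forall_exp_le_norm_rpow_neg {v : E → ℝ} {m₁ m : ℝ}
    (hasymp : Tendsto (fun z => v z / Real.log (1 / ‖z‖)) (𝓝[≠] 0) (𝓝 m₁)) (hm : m₁ < m) :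
    ∃ ε > 0, ∀ z : E, 0 < ‖z‖ → ‖z‖ < ε → Real.exp (v z) ≤ ‖z‖ ^ (-m) := by
  obtain ⟨ε, hε, hball⟩ :=
    Metric.mem_nhdsWithin_iff.mp (hasymp.eventually (eventually_lt_nhds hm))
  refine ⟨min ε 1, lt_min hε one_pos, fun z hz hzε => ?_⟩
  have hquot : v z / Real.log (1 / ‖z‖) < m :=
    hball ⟨mem_ball_zero_iff.mpr (hzε.trans_le (min_le_left _ _)), norm_pos_iff.mp hz⟩
  have hlog : Real.log (1 / ‖z‖) = -Real.log ‖z‖ := by rw [one_div, Real.log_inv]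
  have hlog_pos : 0 < Real.log (1 / ‖z‖) := by
    rw [hlog, neg_pos]
    exact Real.log_neg hz (hzε.trans_le (min_le_right _ _))
  rw [Real.rpow_def_of_pos hz]
  have hv : v z < m * Real.log (1 / ‖z‖) := (div_lt_iff₀ hlog_pos).mp hquot
  rw [hlog] at hv
  exact Real.exp_le_exp.mpr (by linarith)

end GrowthBound

theorem integrableOn_Ioo_one_sub_rpow {s : ℝ} (hs : -1 < s) :
    IntegrableOn (fun t : ℝ => (1 - t) ^ s) (Set.Ioo 0 1) := by
  have h := ((intervalIntegral.intervalIntegrable_rpow' hs (a := 0) (b := 1)).comp_sub_left 1).symm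
  simp only [sub_self, sub_zero] at h
  exact (intervalIntegrable_iff_integrableOn_Ioo_of_le zero_le_one).mp h

section RadialSegment

variable {E : Type*} [NormedAddCommGroup E] [NormedSpace ℝ E]

def radialSegment (r : ℝ) (e : E) (t : ℝ) : E := (r * (1 - t)) • e

variable {r : ℝ} {e : E}

theorem norm_radialSegment (hr : 0 ≤ r) (he : ‖e‖ = 1) {t : ℝ} (ht : t ≤ 1) :
    ‖radialSegment r e t‖ = r * (1 - t) := by
  rw [radialSegment, norm_smul, he, mul_one, Real.norm_of_nonneg (by nlinarith)]

theorem hasDerivAt_radialSegment (t : ℝ) : HasDerivAt (radialSegment r e) ((-r) • e) t := by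
  have h : HasDerivAt (fun t : ℝ => r * (1 - t)) (-r) t := by
    simpa using ((hasDerivAt_id t).const_sub 1).const_mul r
  exact h.smul_const e

theorem contDiff_radialSegment : ContDiff ℝ 1 (radialSegment r e) :=
  (contDiff_const.mul (contDiff_const.sub contDiff_id)).smul contDiff_const

theorem tendsto_radialSegment_one :
    Tendsto (radialSegment r e) (𝓝[<] 1) (𝓝 0) := by
  have h := contDiff_radialSegment.continuous.tendsto (f := radialSegment r e) 1
  simpa [radialSegment] using h.mono_left nhdsWithin_le_nhds

theorem lintegral_exp_mul_norm_deriv_radialSegment_lt_top {v : E → ℝ} {m : ℝ} (hm : m < 1)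
    (hr : 0 < r) (he : ‖e‖ = 1)
    (hv : ∀ z : E, 0 < ‖z‖ → ‖z‖ ≤ r → Real.exp (v z) ≤ ‖z‖ ^ (-m)) :
    ∫⁻ t in Set.Ioo (0 : ℝ) 1,
      ENNReal.ofReal (Real.exp (v (radialSegment r e t)) * ‖deriv (radialSegment r e) t‖) < ⊤ := by
  have hbound : ∀ t ∈ Set.Ioo (0 : ℝ) 1,
      Real.exp (v (radialSegment r e t)) * ‖deriv (radialSegment r e) t‖
        ≤ r ^ (-m) * r * (1 - t) ^ (-m) := by
    intro t ⟨ht0, ht1⟩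
    have hnorm := norm_radialSegment hr.le he ht1.le
    have hpos : 0 < r * (1 - t) := mul_pos hr (by linarith)
    rw [(hasDerivAt_radialSegment t).deriv, norm_smul, he, mul_one, norm_neg,
      Real.norm_of_nonneg hr.le]
    calc Real.exp (v (radialSegment r e t)) * r
        ≤ (r * (1 - t)) ^ (-m) * r := by
          gcongr
          rw [← hnorm]
          exact hv _ (hnorm ▸ hpos) (by rw [hnorm]; nlinarith)
      _ = r ^ (-m) * r * (1 - t) ^ (-m) := by
          rw [Real.mul_rpow hr.le (by linarith)]
          ring
  calc _ ≤ ∫⁻ t in Set.Ioo (0 : ℝ) 1, ENNReal.ofReal (r ^ (-m) * r * (1 - t) ^ (-m)) :=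
        setLIntegral_mono' measurableSet_Ioo fun t ht => ENNReal.ofReal_le_ofReal (hbound t ht)
    _ < ⊤ := IntegrableOn.setLIntegral_lt_top
        ((integrableOn_Ioo_one_sub_rpow (by linarith)).const_mul _)

end RadialSegment

theorem completeness_forces_growth_rate_general
    (R : ℝ) (hR : 0 < R)
    (v : EuclideanSpace ℝ (Fin 2) → ℝ) (m₁ : ℝ)
    (hasymp : Tendsto (fun z => v z / Real.log (1 / ‖z‖))
      (nhdsWithin (0 : EuclideanSpace ℝ (Fin 2)) {0}ᶜ) (nhds m₁))
    (hcomplete : ∀ γ : ℝ → EuclideanSpace ℝ (Fin 2),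
      ContDiffOn ℝ 1 γ (Set.Ico 0 1) →
      (∀ t ∈ Set.Ico (0:ℝ) 1, 0 < ‖γ t‖ ∧ ‖γ t‖ < R) →
      Tendsto γ (nhdsWithin 1 (Set.Iio 1)) (nhds 0) →
      ∫⁻ t in Set.Ioo (0:ℝ) 1, ENNReal.ofReal (Real.exp (v (γ t)) * ‖deriv γ t‖) = ⊤) :
    1 ≤ m₁ := by
  by_contra! hm₁
  obtain ⟨ε, hε, hv⟩ :=
    exists_pos_forall_exp_le_norm_rpow_neg hasymp (m := (m₁ + 1) / 2) (by linarith)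
  obtain ⟨r, hr, hrε, hrR⟩ : ∃ r, 0 < r ∧ r < ε ∧ r < R :=
    ⟨min ε R / 2, by positivity, by linarith [min_le_left ε R], by linarith [min_le_right ε R]⟩
  set e : EuclideanSpace ℝ (Fin 2) := EuclideanSpace.single 0 1
  have he : ‖e‖ = 1 := by simp [e]
  have hinside : ∀ t ∈ Set.Ico (0 : ℝ) 1,
      0 < ‖radialSegment r e t‖ ∧ ‖radialSegment r e t‖ < R := by
    intro t ⟨ht0, ht1⟩
    rw [norm_radialSegment hr.le he ht1.le]
    constructor <;> nlinarith
  refine (lintegral_exp_mul_norm_deriv_radialSegment_lt_top (by linarith) hr he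
    fun z hz hzr => hv z hz (hzr.trans_lt hrε)).ne ?_
  exact hcomplete _ contDiff_radialSegment.contDiffOn hinside tendsto_radialSegment_one

/-- If the conformal metric `e^{2v}(dx²+dy²)` on a punctured disk `{0 < |z| < R} ⊆ ℝ²`
is complete at the puncture (every `C¹` curve tending to the puncture has infinite
length) and `v(z)/log(1/|z|) → m₁` as `|z| → 0⁺`, then `m₁ ≥ 1`. -/
theorem completeness_forces_growth_rate
    (R : ℝ) (hR : 0 < R)
    (v : EuclideanSpace ℝ (Fin 2) → ℝ) (m₁ : ℝ)
    (hcont : ContinuousOn v {z | 0 < ‖z‖ ∧ ‖z‖ < R})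
    (hasymp : Tendsto (fun z => v z / Real.log (1 / ‖z‖))
      (nhdsWithin (0 : EuclideanSpace ℝ (Fin 2)) {0}ᶜ) (nhds m₁))
    (hcomplete : ∀ γ : ℝ → EuclideanSpace ℝ (Fin 2),
      ContDiffOn ℝ 1 γ (Set.Ico 0 1) →
      (∀ t ∈ Set.Ico (0:ℝ) 1, 0 < ‖γ t‖ ∧ ‖γ t‖ < R) →
      Tendsto γ (nhdsWithin 1 (Set.Iio 1)) (nhds 0) →
      ∫⁻ t in Set.Ioo (0:ℝ) 1, ENNReal.ofReal (Real.exp (v (γ t)) * ‖deriv γ t‖) = ⊤) :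
    1 ≤ m₁ :=
  completeness_forces_growth_rate_general R hR v m₁ hasymp hcomplete
end

section
/- Let u : ℝ² → ℝ be C² and define the circle average ū(r) = (1/2π)∫₀^{2π} u(r·cosθ, r·sinθ) dθ for r > 0. Then ū is differentiable on (0,∞), for all 0 < r₂ < r₁ one has r₁·ū′(r₁) - r₂·ū′(r₂) = (1/2π)∫_{{z : r₂ < |z| < r₁}} Δu dA, and moreover r·ū′(r) → 0 as r → 0⁺, so that r·ū′(r) = (1/2π)∫_{{z : |z| < r}} Δu dA for every r > 0. -/
open MeasureTheory Filter

/-- The Euclidean Laplacian of a function on `ℝ²`: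
`Δu = ∂²u/∂x² + ∂²u/∂y²`. -/
noncomputable def lap (u : EuclideanSpace ℝ (Fin 2) → ℝ)
    (z : EuclideanSpace ℝ (Fin 2)) : ℝ :=
  fderiv ℝ (fun w => fderiv ℝ u w (EuclideanSpace.single 0 1)) z (EuclideanSpace.single 0 1) +
  fderiv ℝ (fun w => fderiv ℝ u w (EuclideanSpace.single 1 1)) z (EuclideanSpace.single 1 1)

/-- The circle average `ū(r) = (1/2π) ∫₀^{2π} u(r cos θ, r sin θ) dθ`. -/
noncomputable def circleAverage (u : EuclideanSpace ℝ (Fin 2) → ℝ) (r : ℝ) : ℝ :=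
  (1 / (2 * Real.pi)) * ∫ θ in (0:ℝ)..(2 * Real.pi),
    u !₂[r * Real.cos θ, r * Real.sin θ]

/-!
Let `Φ(r) = r ∫₀^{2π} Du(r e_r)(e_r) dθ`; differentiating under the integral sign gives
`r ū′(r) = Φ(r) / 2π`. Integrating `∂_θ [Du(r e_r)(e_θ)] = r D²u(e_θ, e_θ) - Du(e_r)` over a
period shows `∫ Du(r e_r)(e_r) dθ = r ∫ D²u(e_θ, e_θ) dθ`, so
`Φ′(r) = r ∫ (D²u(e_r, e_r) + D²u(e_θ, e_θ)) dθ = r ∫ Δu(r e_r) dθ`, the trace of the Hessian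
being the same in every orthonormal frame. In polar coordinates the annulus integral of `Δu` is
`∫_{r₂}^{r₁} Φ′ = Φ(r₁) - Φ(r₂)`. Finally `Φ` is continuous with `Φ(0) = 0`, and the disc differs
from the punctured disc by a null set.
-/

open Real hiding circleAverage
open Set

local notation "ℝ²" => EuclideanSpace ℝ (Fin 2)

noncomputable def radialUnit (θ : ℝ) : ℝ² :=
  cos θ • EuclideanSpace.single 0 1 + sin θ • EuclideanSpace.single 1 1

noncomputable def angularUnit (θ : ℝ) : ℝ² :=
  (-sin θ) • EuclideanSpace.single 0 1 + cos θ • EuclideanSpace.single 1 1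

theorem smul_radialUnit (r θ : ℝ) : r • radialUnit θ = !₂[r * cos θ, r * sin θ] := by
  ext i
  fin_cases i <;> simp [radialUnit]

theorem norm_radialUnit (θ : ℝ) : ‖radialUnit θ‖ = 1 := by
  simp [radialUnit, EuclideanSpace.norm_eq, Fin.sum_univ_two]

theorem hasDerivAt_radialUnit (θ : ℝ) : HasDerivAt radialUnit (angularUnit θ) θ :=
  ((hasDerivAt_cos θ).smul_const _).add ((hasDerivAt_sin θ).smul_const _)

theorem hasDerivAt_angularUnit (θ : ℝ) : HasDerivAt angularUnit (-radialUnit θ) θ := by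
  refine (((hasDerivAt_sin θ).neg.smul_const (EuclideanSpace.single (0 : Fin 2) (1 : ℝ))).add
    ((hasDerivAt_cos θ).smul_const (EuclideanSpace.single (1 : Fin 2) (1 : ℝ)))).congr_deriv ?_
  simp only [radialUnit, neg_add, neg_smul]

@[fun_prop]
theorem continuous_radialUnit : Continuous radialUnit :=
  continuous_iff_continuousAt.2 fun θ => (hasDerivAt_radialUnit θ).continuousAt

@[fun_prop]
theorem continuous_angularUnit : Continuous angularUnit :=
  continuous_iff_continuousAt.2 fun θ => (hasDerivAt_angularUnit θ).continuousAt

theorem radialUnit_periodic : Function.Periodic radialUnit (2 * π) :=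
  fun θ => by simp [radialUnit]

theorem angularUnit_periodic : Function.Periodic angularUnit (2 * π) :=
  fun θ => by simp [angularUnit]

theorem ContinuousLinearMap.apply_rotation_diag_add {E F : Type*} [NormedAddCommGroup E]
    [NormedSpace ℝ E] [NormedAddCommGroup F] [NormedSpace ℝ F] (B : E →L[ℝ] E →L[ℝ] F)
    (x y : E) {c s : ℝ} (h : c ^ 2 + s ^ 2 = 1) :
    B (c • x + s • y) (c • x + s • y) + B ((-s) • x + c • y) ((-s) • x + c • y)
      = B x x + B y y := by
  simp only [map_add, map_smul, add_apply, smul_apply]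
  linear_combination (norm := module) h • (B x x + B y y)

theorem lap_eq_hessian {u : ℝ² → ℝ} {z : ℝ²} (hu : DifferentiableAt ℝ (fderiv ℝ u) z) :
    lap u z = fderiv ℝ (fderiv ℝ u) z (EuclideanSpace.single 0 1) (EuclideanSpace.single 0 1)
      + fderiv ℝ (fderiv ℝ u) z (EuclideanSpace.single 1 1) (EuclideanSpace.single 1 1) := by
  simp [lap, fderiv_clm_apply hu (differentiableAt_const _)]

theorem lap_eq_polar_hessian {u : ℝ² → ℝ} {z : ℝ²} (hu : DifferentiableAt ℝ (fderiv ℝ u) z)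
    (θ : ℝ) :
    lap u z = fderiv ℝ (fderiv ℝ u) z (radialUnit θ) (radialUnit θ)
      + fderiv ℝ (fderiv ℝ u) z (angularUnit θ) (angularUnit θ) := by
  rw [lap_eq_hessian hu, radialUnit, angularUnit,
    ContinuousLinearMap.apply_rotation_diag_add _ _ _ (cos_sq_add_sin_sq θ)]

theorem hasDerivAt_intervalIntegral_of_continuous {E : Type*} [NormedAddCommGroup E]
    [NormedSpace ℝ E] {F F' : ℝ → ℝ → E} (hF : Continuous (Function.uncurry F))
    (hF' : Continuous (Function.uncurry F')) (hd : ∀ x t, HasDerivAt (fun y => F y t) (F' x t) x)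
    (a b x₀ : ℝ) : HasDerivAt (fun x => ∫ t in a..b, F x t) (∫ t in a..b, F' x₀ t) x₀ := by
  obtain ⟨C, hC⟩ := ((isCompact_closedBall x₀ 1).prod isCompact_uIcc).exists_bound_of_continuousOn
    hF'.continuousOn
  refine (intervalIntegral.hasDerivAt_integral_of_dominated_loc_of_deriv_le (bound := fun _ => C)
    (Metric.ball_mem_nhds x₀ one_pos) (Eventually.of_forall fun x => ?_) ?_ ?_ ?_
    intervalIntegrable_const (Eventually.of_forall fun t _ x _ => hd x t)).2
  · exact (hF.comp (Continuous.prodMk_right x)).aestronglyMeasurable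
  · exact (hF.comp (Continuous.prodMk_right x₀)).intervalIntegrable a b
  · exact (hF'.comp (Continuous.prodMk_right x₀)).aestronglyMeasurable
  · exact Eventually.of_forall fun t ht x hx =>
      hC (x, t) ⟨Metric.ball_subset_closedBall hx, uIoc_subset_uIcc ht⟩

section RadialDerivative

variable {F : Type*} [NormedAddCommGroup F] [NormedSpace ℝ F] {u : ℝ² → F}

noncomputable def radialDerivIntegral (u : ℝ² → F) (r : ℝ) : F :=
  ∫ θ in 0..2 * π, fderiv ℝ u (r • radialUnit θ) (radialUnit θ)

theorem hasDerivAt_smul_radialUnit (θ r : ℝ) :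
    HasDerivAt (fun r : ℝ => r • radialUnit θ) (radialUnit θ) r := by
  simpa using (hasDerivAt_id r).smul_const (radialUnit θ)

theorem hasDerivAt_integral_comp_smul_radialUnit (hu : ContDiff ℝ 1 u) (r : ℝ) :
    HasDerivAt (fun r => ∫ θ in 0..2 * π, u (r • radialUnit θ)) (radialDerivIntegral u r) r := by
  refine hasDerivAt_intervalIntegral_of_continuous (F := fun r θ => u (r • radialUnit θ))
    (F' := fun r θ => fderiv ℝ u (r • radialUnit θ) (radialUnit θ))
    (by fun_prop) (by fun_prop) (fun r θ => ?_) _ _ r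
  exact ((hu.differentiable one_ne_zero _).hasFDerivAt.comp_hasDerivAt r
    (hasDerivAt_smul_radialUnit θ r))

theorem hasDerivAt_radialDerivIntegral (hu : ContDiff ℝ 2 u) (r : ℝ) :
    HasDerivAt (radialDerivIntegral u)
      (∫ θ in 0..2 * π, fderiv ℝ (fderiv ℝ u) (r • radialUnit θ) (radialUnit θ) (radialUnit θ))
      r := by
  have hu₁ : ContDiff ℝ 1 (fderiv ℝ u) := hu.fderiv_right (m := 1) (by norm_num)
  refine hasDerivAt_intervalIntegral_of_continuous
    (F := fun r θ => fderiv ℝ u (r • radialUnit θ) (radialUnit θ))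
    (F' := fun r θ => fderiv ℝ (fderiv ℝ u) (r • radialUnit θ) (radialUnit θ) (radialUnit θ))
    (by fun_prop) (by fun_prop) (fun r θ => ?_) _ _ r
  simpa using ((hu₁.differentiable one_ne_zero _).hasFDerivAt.comp_hasDerivAt r
    (hasDerivAt_smul_radialUnit θ r)).clm_apply (hasDerivAt_const r (radialUnit θ))

theorem radialDerivIntegral_eq_smul_integral_angular_hessian [CompleteSpace F] (hu : ContDiff ℝ 2 u) (r : ℝ) :
    radialDerivIntegral u r = r • ∫ θ in 0..2 * π,
      fderiv ℝ (fderiv ℝ u) (r • radialUnit θ) (angularUnit θ) (angularUnit θ) := by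
  have hu₁ : ContDiff ℝ 1 (fderiv ℝ u) := hu.fderiv_right (m := 1) (by norm_num)
  have hΦ : ∀ θ, HasDerivAt (fun θ => fderiv ℝ u (r • radialUnit θ) (angularUnit θ))
      (r • fderiv ℝ (fderiv ℝ u) (r • radialUnit θ) (angularUnit θ) (angularUnit θ)
        - fderiv ℝ u (r • radialUnit θ) (radialUnit θ)) θ := fun θ =>
    (((hu₁.differentiable one_ne_zero _).hasFDerivAt.comp_hasDerivAt θ
      ((hasDerivAt_radialUnit θ).const_smul r)).clm_apply (hasDerivAt_angularUnit θ)).congr_deriv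
      (by simp [sub_eq_add_neg])
  have hFTC := intervalIntegral.integral_eq_sub_of_hasDerivAt (a := 0) (b := 2 * π) (fun θ _ => hΦ θ)
    (Continuous.intervalIntegrable (by fun_prop) _ _)
  rw [radialUnit_periodic.eq, angularUnit_periodic.eq, sub_self,
    intervalIntegral.integral_sub (Continuous.intervalIntegrable (by fun_prop) _ _)
      (Continuous.intervalIntegrable (by fun_prop) _ _),
    intervalIntegral.integral_smul] at hFTC
  exact (sub_eq_zero.1 hFTC).symm

end RadialDerivative

section Laplacian

variable {u : ℝ² → ℝ}

theorem continuous_lap (hu : ContDiff ℝ 2 u) : Continuous (lap u) := by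
  have hu₁ : ContDiff ℝ 1 (fderiv ℝ u) := hu.fderiv_right (m := 1) (by norm_num)
  rw [show lap u = _ from funext fun z => lap_eq_hessian (hu₁.differentiable one_ne_zero z)]
  fun_prop

theorem hasDerivAt_mul_radialDerivIntegral (hu : ContDiff ℝ 2 u) (r : ℝ) :
    HasDerivAt (fun r => r * radialDerivIntegral u r)
      (r * ∫ θ in 0..2 * π, lap u (r • radialUnit θ)) r := by
  have hu₁ : ContDiff ℝ 1 (fderiv ℝ u) := hu.fderiv_right (m := 1) (by norm_num)
  have hlap : ∫ θ in 0..2 * π, lap u (r • radialUnit θ)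
      = (∫ θ in 0..2 * π,
          fderiv ℝ (fderiv ℝ u) (r • radialUnit θ) (radialUnit θ) (radialUnit θ))
        + ∫ θ in 0..2 * π,
          fderiv ℝ (fderiv ℝ u) (r • radialUnit θ) (angularUnit θ) (angularUnit θ) := by
    rw [← intervalIntegral.integral_add (Continuous.intervalIntegrable (by fun_prop) _ _)
      (Continuous.intervalIntegrable (by fun_prop) _ _)]
    exact intervalIntegral.integral_congr fun θ _ =>
      lap_eq_polar_hessian (hu₁.differentiable one_ne_zero _) θ
  refine ((hasDerivAt_id r).mul (hasDerivAt_radialDerivIntegral hu r)).congr_deriv ?_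
  rw [hlap, radialDerivIntegral_eq_smul_integral_angular_hessian hu, smul_eq_mul, id, one_mul]
  ring

end Laplacian

section PolarCoordinates

variable {E : Type*} [NormedAddCommGroup E] [NormedSpace ℝ E]

theorem integral_eq_integral_polarCoord_target (f : ℝ² → E) :
    ∫ z, f z = ∫ p in polarCoord.target, p.1 • f (p.1 • radialUnit p.2) := by
  let ψ : ℝ × ℝ ≃ᵐ ℝ² :=
    MeasurableEquiv.finTwoArrow.symm.trans (MeasurableEquiv.toLp 2 (Fin 2 → ℝ))
  have hψ : MeasurePreserving ψ :=
    (PiLp.volume_preserving_toLp (Fin 2)).comp (volume_preserving_finTwoArrow ℝ).symm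
  rw [← hψ.integral_comp', ← integral_comp_polarCoord_symm]
  simp only [smul_radialUnit]
  rfl

theorem norm_smul_radialUnit (r θ : ℝ) : ‖r • radialUnit θ‖ = |r| := by
  rw [norm_smul, norm_radialUnit, mul_one, Real.norm_eq_abs]

theorem setIntegral_annulus_eq_intervalIntegral {f : ℝ² → E} (hf : Continuous f) {r₁ r₂ : ℝ}
    (h₀ : 0 ≤ r₂) (h : r₂ ≤ r₁) :
    ∫ z in {z : ℝ² | r₂ < ‖z‖ ∧ ‖z‖ < r₁}, f z
      = ∫ r in r₂..r₁, r • ∫ θ in 0..2 * π, f (r • radialUnit θ) := by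
  have hS : MeasurableSet {z : ℝ² | r₂ < ‖z‖ ∧ ‖z‖ < r₁} :=
    (measurableSet_lt measurable_const measurable_norm).inter
      (measurableSet_lt measurable_norm measurable_const)
  have hpolar : ∀ p ∈ polarCoord.target,
      p.1 • {z : ℝ² | r₂ < ‖z‖ ∧ ‖z‖ < r₁}.indicator f (p.1 • radialUnit p.2)
        = (Ioo r₂ r₁ ×ˢ univ).indicator (fun p : ℝ × ℝ => p.1 • f (p.1 • radialUnit p.2)) p := by
    rintro ⟨r, θ⟩ ⟨hr, -⟩
    simp [indicator_apply, norm_smul_radialUnit, abs_of_pos (mem_Ioi.1 hr)]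
  have htarget : polarCoord.target ∩ Ioo r₂ r₁ ×ˢ univ = Ioo r₂ r₁ ×ˢ Ioo (-π) π := by
    rw [show polarCoord.target = Ioi 0 ×ˢ Ioo (-π) π from rfl, prod_inter_prod, inter_univ,
      inter_eq_right.2 (Ioo_subset_Ioi_self.trans (Ioi_subset_Ioi h₀))]
  have hint : IntegrableOn (fun p : ℝ × ℝ => p.1 • f (p.1 • radialUnit p.2))
      (Ioo r₂ r₁ ×ˢ Ioo (-π) π) :=
    (ContinuousOn.integrableOn_compact (isCompact_Icc.prod isCompact_Icc)
      (by fun_prop : Continuous _).continuousOn).mono_set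
      (prod_mono Ioo_subset_Icc_self Ioo_subset_Icc_self)
  rw [← integral_indicator hS, integral_eq_integral_polarCoord_target,
    setIntegral_congr_fun polarCoord.open_target.measurableSet hpolar,
    setIntegral_indicator (measurableSet_Ioo.prod MeasurableSet.univ), htarget,
    Measure.volume_eq_prod, setIntegral_prod _ hint, intervalIntegral.integral_of_le h,
    integral_Ioc_eq_integral_Ioo]
  refine setIntegral_congr_fun measurableSet_Ioo fun r _ => ?_
  have hper : Function.Periodic (fun θ => f (r • radialUnit θ)) (2 * π) := fun θ => by
    simp only [radialUnit_periodic θ]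
  have := hper.intervalIntegral_add_eq (-π) 0
  rw [zero_add, show -π + 2 * π = π by ring] at this
  rw [integral_smul, ← this, intervalIntegral.integral_of_le (by linarith [pi_pos]),
    integral_Ioc_eq_integral_Ioo]

end PolarCoordinates

theorem setOf_norm_lt_ae_eq_setOf_pos_norm_lt {E : Type*} [NormedAddCommGroup E]
    [MeasurableSpace E] {μ : Measure E} [NullSingletonClass μ] {r : ℝ} (hr : 0 < r) :
    {z : E | ‖z‖ < r} =ᵐ[μ] {z : E | 0 < ‖z‖ ∧ ‖z‖ < r} := by
  have : {z : E | ‖z‖ < r} = insert 0 {z : E | 0 < ‖z‖ ∧ ‖z‖ < r} := by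
    ext z
    rcases eq_or_ne z 0 with rfl | hz <;> simp [*]
  rw [this]
  exact insert_ae_eq_self _ _

theorem hasDerivAt_circleAverage {u : ℝ² → ℝ} (hu : ContDiff ℝ 1 u) (r : ℝ) :
    HasDerivAt (circleAverage u) (1 / (2 * π) * radialDerivIntegral u r) r := by
  have : circleAverage u = fun r => 1 / (2 * π) * ∫ θ in 0..2 * π, u (r • radialUnit θ) := by
    ext r
    simp only [circleAverage, smul_radialUnit]
  rw [this]
  exact (hasDerivAt_integral_comp_smul_radialUnit hu r).const_mul _

/-- For a `C²` function `u` on `ℝ²`, the circle average `ū` is differentiable on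
`(0,∞)`, satisfies `r₁ ū′(r₁) - r₂ ū′(r₂) = (1/2π) ∫_{r₂<|z|<r₁} Δu dA` for
`0 < r₂ < r₁`, `r ū′(r) → 0` as `r → 0⁺`, and hence
`r ū′(r) = (1/2π) ∫_{|z|<r} Δu dA` for every `r > 0`. -/
theorem circle_average_derivative_identity
    (u : EuclideanSpace ℝ (Fin 2) → ℝ) (hu : ContDiff ℝ 2 u) :
    (∀ r : ℝ, 0 < r → DifferentiableAt ℝ (circleAverage u) r) ∧
    (∀ r₁ r₂ : ℝ, 0 < r₂ → r₂ < r₁ →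
      r₁ * deriv (circleAverage u) r₁ - r₂ * deriv (circleAverage u) r₂
        = (1 / (2 * Real.pi)) *
            ∫ z in {z : EuclideanSpace ℝ (Fin 2) | r₂ < ‖z‖ ∧ ‖z‖ < r₁}, lap u z) ∧
    Tendsto (fun r => r * deriv (circleAverage u) r) (nhdsWithin 0 (Set.Ioi 0)) (nhds 0) ∧
    (∀ r : ℝ, 0 < r →
      r * deriv (circleAverage u) r
        = (1 / (2 * Real.pi)) * ∫ z in {z : EuclideanSpace ℝ (Fin 2) | ‖z‖ < r}, lap u z) := by
  have hderiv := hasDerivAt_circleAverage (hu.of_le one_le_two)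
  set flux := fun r => r * radialDerivIntegral u r
  have hflux : ∀ r, r * deriv (circleAverage u) r = 1 / (2 * π) * flux r := fun r => by
    rw [(hderiv r).deriv]
    ring
  have hannulus : ∀ r₁ r₂, 0 ≤ r₂ → r₂ < r₁ →
      ∫ z in {z : ℝ² | r₂ < ‖z‖ ∧ ‖z‖ < r₁}, lap u z = flux r₁ - flux r₂ := fun r₁ r₂ h₀ h => by
    have hlap := continuous_lap hu
    rw [setIntegral_annulus_eq_intervalIntegral hlap h₀ h.le]
    exact intervalIntegral.integral_eq_sub_of_hasDerivAt
      (fun r _ => hasDerivAt_mul_radialDerivIntegral hu r)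
      (Continuous.intervalIntegrable (by fun_prop) _ _)
  have hflux_cont : Continuous flux :=
    continuous_iff_continuousAt.2 fun r => (hasDerivAt_mul_radialDerivIntegral hu r).continuousAt
  refine ⟨fun r _ => (hderiv r).differentiableAt, fun r₁ r₂ h₂ h => ?_, ?_, fun r hr => ?_⟩
  · rw [hflux, hflux, hannulus r₁ r₂ h₂.le h]
    ring
  · simpa [funext hflux, flux] using
      ((hflux_cont.tendsto 0).const_mul (1 / (2 * π))).mono_left nhdsWithin_le_nhds
  · rw [hflux, setIntegral_congr_set (setOf_norm_lt_ae_eq_setOf_pos_norm_lt hr),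
      hannulus r 0 le_rfl hr, show flux 0 = 0 from zero_mul _, sub_zero]
end

section
/- Let f : ℂ → ℂ be an entire (everywhere complex-differentiable) function and suppose that for some p ≥ 1 the integral ∫_ℂ |f(z)|^p dA(z) with respect to Lebesgue measure on ℂ ≅ ℝ² is finite. Then f is identically zero. -/
/-!
By the mean value property, `f c` is the average of `f` over each circle about `c`, so by
Jensen's inequality for the convex function `t ↦ t ^ p` the average of `‖f‖ ^ p` over that
circle is at least `‖f c‖ ^ p`. Integrating in polar coordinates about `c` then gives
`∫ ‖f‖ ^ p ≥ 2π ‖f c‖ ^ p ∫₀^∞ r dr`, which is infinite unless `f c = 0`.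
-/

open MeasureTheory Set Metric Real
open scoped ENNReal

theorem convexOn_norm_rpow {E : Type*} [NormedAddCommGroup E] [NormedSpace ℝ E] {p : ℝ}
    (hp : 1 ≤ p) : ConvexOn ℝ univ fun x : E ↦ ‖x‖ ^ p := by
  refine ⟨convex_univ, fun x _ y _ a b ha hb hab ↦ ?_⟩
  calc ‖a • x + b • y‖ ^ p ≤ (a * ‖x‖ + b * ‖y‖) ^ p := by
        gcongr
        calc ‖a • x + b • y‖ ≤ ‖a • x‖ + ‖b • y‖ := norm_add_le _ _
          _ = a * ‖x‖ + b * ‖y‖ := by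
            rw [norm_smul, norm_smul, Real.norm_of_nonneg ha, Real.norm_of_nonneg hb]
    _ ≤ a * ‖x‖ ^ p + b * ‖y‖ ^ p :=
        (convexOn_rpow hp).2 (norm_nonneg x) (norm_nonneg y) ha hb hab

theorem DiffContOnCl.norm_rpow_le_circleAverage {E : Type*} [NormedAddCommGroup E]
    [NormedSpace ℂ E] [CompleteSpace E] {f : ℂ → E} {c : ℂ} {R p : ℝ}
    (hf : DiffContOnCl ℂ f (ball c |R|)) (hp : 1 ≤ p) :
    ‖f c‖ ^ p ≤ Real.circleAverage (fun z ↦ ‖f z‖ ^ p) c R := by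
  rcases eq_or_ne R 0 with rfl | hR
  · simp
  have hcont : ContinuousOn f (sphere c |R|) := by
    refine hf.continuousOn.mono ?_
    rw [closure_ball c (abs_ne_zero.2 hR)]
    exact sphere_subset_closedBall
  have hnorm_rpow : Continuous fun x : E ↦ ‖x‖ ^ p :=
    continuous_norm.rpow_const fun _ ↦ Or.inr (by linarith)
  rw [← hf.circleAverage, circleAverage_eq_intervalAverage, circleAverage_eq_intervalAverage]
  refine (convexOn_norm_rpow hp).map_set_average_le hnorm_rpow.continuousOn isClosed_univ
    ?_ ?_ (by simp) (intervalIntegrable_iff.1 hcont.circleIntegrable')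
    (intervalIntegrable_iff.1 (hnorm_rpow.comp_continuousOn hcont).circleIntegrable')
  · simp [pi_pos.ne']
  · simp [ENNReal.mul_eq_top]

theorem lintegral_Ioo_circleMap_eq_ofReal_circleAverage {g : ℂ → ℝ} {c : ℂ} {R : ℝ}
    (hg : CircleIntegrable g c R) (hg₀ : 0 ≤ g) :
    ∫⁻ θ in Ioo (-π) π, ENNReal.ofReal (g (circleMap c R θ)) =
      ENNReal.ofReal (2 * π * circleAverage g c R) := by
  have hper : Function.Periodic (fun θ ↦ g (circleMap c R θ)) (2 * π) :=
    fun θ ↦ by simp only [periodic_circleMap c R θ]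
  have hshift := hper.intervalIntegral_add_eq (-π) 0
  have hint := (hper.intervalIntegrable_iff (t₁ := -π) (t₂ := 0)).2 (by rw [zero_add]; exact hg)
  rw [show -π + 2 * π = π by ring, zero_add] at hshift
  rw [show -π + 2 * π = π by ring] at hint
  rw [circleAverage_def, smul_eq_mul, ← mul_assoc, mul_inv_cancel₀ two_pi_pos.ne', one_mul,
    ← hshift, intervalIntegral.integral_of_le (by linarith [pi_pos]),
    ofReal_integral_eq_lintegral_ofReal hint.1 (Filter.Eventually.of_forall fun _ ↦ hg₀ _),
    setLIntegral_congr Ioo_ae_eq_Ioc]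

theorem Complex.lintegral_eq_lintegral_Ioi_mul_lintegral_circleMap (c : ℂ) {g : ℂ → ℝ≥0∞}
    (hg : Measurable g) :
    ∫⁻ z, g z = ∫⁻ r in Ioi 0, ENNReal.ofReal r * ∫⁻ θ in Ioo (-π) π, g (circleMap c r θ) := by
  have hpolar : ∀ q : ℝ × ℝ, Complex.polarCoord.symm q + c = circleMap c q.1 q.2 := fun q ↦ by
    simp [circleMap, Complex.exp_mul_I, add_comm]
  have hmeas : Measurable fun q : ℝ × ℝ ↦ ENNReal.ofReal q.1 * g (circleMap c q.1 q.2) := by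
    fun_prop
  calc ∫⁻ z, g z = ∫⁻ z, g (z + c) := (lintegral_add_right_eq_self g c).symm
    _ = ∫⁻ q in Ioi 0 ×ˢ Ioo (-π) π, ENNReal.ofReal q.1 * g (circleMap c q.1 q.2) := by
      simp_rw [← Complex.lintegral_comp_polarCoord_symm, hpolar, smul_eq_mul, polarCoord_target]
    _ = ∫⁻ r in Ioi 0, ∫⁻ θ in Ioo (-π) π, ENNReal.ofReal r * g (circleMap c r θ) := by
      rw [Measure.volume_eq_prod, ← Measure.prod_restrict, lintegral_prod _ hmeas.aemeasurable]
    _ = _ := by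
      congr! 2 with r
      exact lintegral_const_mul' _ _ ENNReal.ofReal_ne_top

theorem lintegral_Ioi_ofReal_eq_top : ∫⁻ r in Ioi (0 : ℝ), ENNReal.ofReal r = ∞ := by
  by_contra h
  refine not_integrableOn_Ioi_rpow 1 ?_
  simp_rw [rpow_one]
  exact (lintegral_ofReal_ne_top_iff_integrable (f := fun r : ℝ ↦ r)
    measurable_id.aestronglyMeasurable
    (ae_restrict_of_forall_mem measurableSet_Ioi fun _ hr ↦ hr.le)).1 h

/-- An `L^p` Liouville theorem: an entire function `f : ℂ → ℂ` with
`∫_ℂ |f|^p dA < ∞` for some `p ≥ 1` (Lebesgue measure on `ℂ ≅ ℝ²`) is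
identically zero. -/
theorem entire_Lp_implies_zero
    (f : ℂ → ℂ) (hf : Differentiable ℂ f)
    (p : ℝ) (hp : 1 ≤ p)
    (hint : ∫⁻ z : ℂ, ENNReal.ofReal (‖f z‖ ^ p) < ⊤) :
    ∀ z : ℂ, f z = 0 := by
  intro c
  by_contra hc
  set C := ENNReal.ofReal (2 * π * ‖f c‖ ^ p)
  have hC : C ≠ 0 := (ENNReal.ofReal_pos.2 (by have := norm_pos_iff.2 hc; positivity)).ne'
  have hcont : Continuous fun z ↦ ‖f z‖ ^ p :=
    hf.continuous.norm.rpow_const fun _ ↦ Or.inr (by linarith)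
  have hcircle (r : ℝ) :
      C ≤ ∫⁻ θ in Ioo (-π) π, ENNReal.ofReal (‖f (circleMap c r θ)‖ ^ p) := by
    rw [lintegral_Ioo_circleMap_eq_ofReal_circleAverage hcont.continuousOn.circleIntegrable'
      fun _ ↦ by positivity]
    exact ENNReal.ofReal_le_ofReal <| mul_le_mul_of_nonneg_left
      (hf.diffContOnCl.norm_rpow_le_circleAverage hp) two_pi_pos.le
  refine hint.ne (eq_top_iff.2 ?_)
  calc ∞ = ∫⁻ r in Ioi 0, ENNReal.ofReal r * C := by
        rw [lintegral_mul_const' _ _ ENNReal.ofReal_ne_top, lintegral_Ioi_ofReal_eq_top,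
          ENNReal.top_mul hC]
    _ ≤ ∫⁻ r in Ioi 0, ENNReal.ofReal r *
          ∫⁻ θ in Ioo (-π) π, ENNReal.ofReal (‖f (circleMap c r θ)‖ ^ p) := by
        gcongr with r
        exact hcircle r
    _ = ∫⁻ z, ENNReal.ofReal (‖f z‖ ^ p) :=
        (Complex.lintegral_eq_lintegral_Ioi_mul_lintegral_circleMap c
          hcont.measurable.ennreal_ofReal).symm
end
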